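/- arXiv:2407.06890 — 4 statements merged into one kernel-verified Lean document; each statement's English description precedes it below -/
import Mathlib

section
/- Let {V_n : n ∈ ℕ} be a family of pairwise disjoint countable subsets of the open square J̊² = (-1,1)², and {W_n : n ∈ ℕ} a family of pairwise disjoint subsets of J̊², such that each V_n and each W_n is dense in J². Then for every λ > 1 and every ε > 0 there exists a λ-homeomorphism h : J² → J² such that h restricted to ∂J² is the identity, d(h(x),x) < ε for every x ∈ J², and h(V_n) ⊆ W_n for every n ∈ ℕ. -/
open Set

/-- The square `J² = [-1,1]²` as a subset of `ℝ²`. -/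
def Sq : Set (ℝ × ℝ) := Set.Icc (-1) 1 ×ˢ Set.Icc (-1) 1

/-- The open square `J̊² = (-1,1)²`. -/
def SqO : Set (ℝ × ℝ) := Set.Ioo (-1) 1 ×ˢ Set.Ioo (-1) 1

/-- The horizontal segment `J_s = J × {s}`. -/
def Js (s : ℝ) : Set (ℝ × ℝ) := Set.Icc (-1) 1 ×ˢ {s}

/-- The open horizontal segment `J̊_s = (-1,1) × {s}`. -/
def JsO (s : ℝ) : Set (ℝ × ℝ) := Set.Ioo (-1) 1 ×ˢ {s}

/-- The boundary `∂J²` of the square. -/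
def bdSq : Set (ℝ × ℝ) := frontier Sq

/-- The Euclidean distance on `ℝ²`. -/
noncomputable def dE (x y : ℝ × ℝ) : ℝ := Real.sqrt ((x.1 - y.1) ^ 2 + (x.2 - y.2) ^ 2)

/-- The Euclidean distance between two subsets of `ℝ²`. -/
noncomputable def dESet (A B : Set (ℝ × ℝ)) : ℝ := sInf (Set.image2 dE A B)

/-- The Euclidean diameter of a subset of `ℝ²`. -/
noncomputable def diamE (A : Set (ℝ × ℝ)) : ℝ := sSup (Set.image2 dE A A)

/-!
Enumerate the points of `⋃ n, V n` as `e 0, e 1, …` and work in `ℂ ≅ ℝ²`. Step `k` post-composes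
the map `H` built so far with a bump `x ↦ x + φ x • v`, where `φ` is a tent function supported in a
small ball inside the open square that avoids `H (e 0), …, H (e (k-1))`; the bump moves `H (e k)` to
a nearby point of the dense set `W n` and fixes the earlier points. If `φ • v` is `t`-Lipschitz with
`t < 1`, the bump is a bijection (contraction principle) with Lipschitz constants `1 + t` and
`(1 - t)⁻¹`, so the steps can be chosen with constants whose products stay below `λ` and with
summable displacements. The maps and their inverses then converge, and the limit is a
`λ`-bi-Lipschitz bijection, the identity off the open square, sending each `e k` into its target.
-/

open Filter Topology NNReal

theorem AntilipschitzWith.weaken {α β : Type*} [PseudoEMetricSpace α] [PseudoEMetricSpace β]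
    {K K' : ℝ≥0} {f : α → β} (hf : AntilipschitzWith K f) (h : K ≤ K') :
    AntilipschitzWith K' f := fun x y =>
  (hf x y).trans (by gcongr)

namespace Equiv

variable {α : Type*} {g : α ≃ α} {U : Set α}

theorem mapsTo_of_eqOn_compl (h : EqOn g id Uᶜ) : MapsTo g U U := fun x hx => by
  by_contra hgx
  rw [g.injective (h hgx)] at hgx
  exact hgx hx

theorem apply_mem_iff_of_eqOn_compl (h : EqOn g id Uᶜ) {s : Set α} (hUs : U ⊆ s) (x : α) :
    g x ∈ s ↔ x ∈ s := by
  by_cases hx : x ∈ U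
  · exact iff_of_true (hUs (mapsTo_of_eqOn_compl h hx)) (hUs hx)
  · rw [h hx, id]

end Equiv

theorem LipschitzWith.exists_equiv_id_add {E : Type*} [NormedAddCommGroup E] [CompleteSpace E]
    {f : E → E} {t : ℝ≥0} (hf : LipschitzWith t f) (ht : t < 1) :
    ∃ g : E ≃ E, (∀ x, g x = x + f x) ∧ LipschitzWith (1 + t) g ∧
      AntilipschitzWith (1 - t)⁻¹ g := by
  have hanti : AntilipschitzWith (1 - t)⁻¹ fun x => x + f x := by
    simpa using AntilipschitzWith.id.add_lipschitzWith hf (by simpa using ht)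
  have hsurj : Function.Surjective fun x => x + f x := fun y => by
    have hc : ContractingWith t fun x => y - f x :=
      ⟨ht, by simpa using (LipschitzWith.const y).sub hf⟩
    exact ⟨hc.fixedPoint, eq_sub_iff_add_eq.1 hc.fixedPoint_isFixedPt.symm⟩
  exact ⟨Equiv.ofBijective _ ⟨hanti.injective, hsurj⟩, fun _ => rfl,
    LipschitzWith.id.add hf, hanti⟩

section Bump

variable {E : Type*} [NormedAddCommGroup E] [NormedSpace ℝ E]

theorem lipschitzWith_tent_smul (p u : E) (r : ℝ) :
    LipschitzWith ‖u‖₊ fun x => max (r - dist x p) 0 • u := by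
  have hφ : LipschitzWith 1 fun x => max (r - dist x p) 0 :=
    ((LipschitzWith.const r).sub (LipschitzWith.dist_left p)).max_const 0 |>.weaken (by simp)
  refine LipschitzWith.of_dist_le_mul fun x y => ?_
  rw [dist_eq_norm, ← sub_smul, norm_smul, ← dist_eq_norm, mul_comm, coe_nnnorm]
  gcongr
  simpa using hφ.dist_le_mul x y

variable [CompleteSpace E]

theorem exists_equiv_bump (p v : E) {r : ℝ} (hr : 0 < r) {t : ℝ≥0} (ht : t < 1)
    (hv : ‖v‖ ≤ t * r) :
    ∃ g : E ≃ E, LipschitzWith (1 + t) g ∧ AntilipschitzWith (1 - t)⁻¹ g ∧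
      (∀ x, dist (g x) x ≤ ‖v‖) ∧ (∀ x, r ≤ dist x p → g x = x) ∧ g p = p + v := by
  obtain ⟨u, rfl⟩ : ∃ u, v = r • u := ⟨r⁻¹ • v, (smul_inv_smul₀ hr.ne' v).symm⟩
  have hnorm : ‖r • u‖ = r * ‖u‖ := by rw [norm_smul, Real.norm_of_nonneg hr.le]
  have hu : ‖u‖₊ ≤ t := by
    rw [← NNReal.coe_le_coe, coe_nnnorm]
    nlinarith
  obtain ⟨g, hg, hlip, hanti⟩ :=
    ((lipschitzWith_tent_smul p u r).weaken hu).exists_equiv_id_add ht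
  refine ⟨g, hlip, hanti, fun x => ?_, fun x hx => ?_, ?_⟩
  · rw [hg, dist_eq_norm, add_sub_cancel_left, norm_smul, hnorm,
      Real.norm_of_nonneg (le_max_right _ _)]
    gcongr
    exact max_le (by linarith [dist_nonneg (x := x) (y := p)]) hr.le
  · rw [hg, max_eq_right (by linarith), zero_smul, add_zero]
  · rw [hg, dist_self, sub_zero, max_eq_left hr.le]

theorem exists_equiv_bump_mem {U F T : Set E} (hU : IsOpen U) (hF : F.Finite) {p : E}
    (hpU : p ∈ U) (hpF : p ∉ F) (hpT : p ∈ closure T) {μ : ℝ≥0} (hμ : 1 < μ) {δ : ℝ}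
    (hδ : 0 < δ) :
    ∃ g : E ≃ E, LipschitzWith μ g ∧ AntilipschitzWith μ g ∧ (∀ x, dist (g x) x ≤ δ) ∧
      EqOn g id (U \ F)ᶜ ∧ g p ∈ T := by
  obtain ⟨ρ, hρ, hball⟩ := Metric.isOpen_iff.1 (hU.sdiff hF.isClosed) p ⟨hpU, hpF⟩
  set t : ℝ≥0 := 1 - μ⁻¹
  have hμinv : μ⁻¹ < 1 := inv_lt_one_of_one_lt₀ hμ
  have ht : t < 1 := tsub_lt_self one_pos (inv_pos.2 (one_pos.trans hμ))
  have hLip : 1 + t ≤ μ := by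
    rw [← NNReal.coe_le_coe, NNReal.coe_add, NNReal.coe_sub hμinv.le, NNReal.coe_inv,
      NNReal.coe_one]
    have h1 : (1 : ℝ) < μ := hμ
    have h2 : (μ : ℝ) * (μ : ℝ)⁻¹ = 1 := mul_inv_cancel₀ (by positivity)
    nlinarith [sq_nonneg ((μ : ℝ) - 1), inv_pos.2 (one_pos.trans h1)]
  have hAnti : (1 - t)⁻¹ = μ := by rw [tsub_tsub_cancel_of_le hμinv.le, inv_inv]
  have htr : 0 < (t : ℝ) * (ρ / 2) := mul_pos (tsub_pos_of_lt hμinv) (half_pos hρ)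
  obtain ⟨w, hwT, hpw⟩ := Metric.mem_closure_iff.1 hpT _ (lt_min htr hδ)
  rw [dist_comm, dist_eq_norm] at hpw
  obtain ⟨g, hlip, hanti, hnear, hfix, hgp⟩ :=
    exists_equiv_bump p (w - p) (half_pos hρ) ht (lt_min_iff.1 hpw).1.le
  refine ⟨g, hlip.weaken hLip, hAnti ▸ hanti, fun x => (hnear x).trans (lt_min_iff.1 hpw).2.le,
    fun x hx => hfix x ?_, by rwa [hgp, add_sub_cancel]⟩
  have hxρ : x ∉ Metric.ball p ρ := fun h => hx (hball h)
  rw [Metric.mem_ball, not_lt] at hxρ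
  linarith

end Bump

theorem exists_equiv_tendsto_of_le_geometric_two {α : Type*} [MetricSpace α] [CompleteSpace α]
    {H : ℕ → α ≃ α} {K : ℝ≥0} {C : ℝ} (hL : ∀ k, LipschitzWith K (H k))
    (hA : ∀ k, AntilipschitzWith K (H k)) (hC : ∀ k x, dist (H k x) (H (k + 1) x) ≤ C / 2 / 2 ^ k) :
    ∃ h : α ≃ α, LipschitzWith K h ∧ AntilipschitzWith K h ∧
      ∀ x, Tendsto (fun k => H k x) atTop (𝓝 (h x)) := by
  have hCsymm : ∀ k y, dist ((H k).symm y) ((H (k + 1)).symm y) ≤ K * C / 2 / 2 ^ k := by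
    intro k y
    obtain ⟨x, rfl⟩ := (H (k + 1)).surjective y
    calc dist ((H k).symm (H (k + 1) x)) ((H (k + 1)).symm (H (k + 1) x))
        = dist ((H k).symm (H (k + 1) x)) ((H k).symm (H k x)) := by simp
      _ ≤ K * dist (H (k + 1) x) (H k x) :=
          ((hA k).to_rightInverse (H k).right_inv).dist_le_mul _ _
      _ ≤ K * (C / 2 / 2 ^ k) := by rw [dist_comm]; gcongr; exact hC k x
      _ = K * C / 2 / 2 ^ k := by ring
  choose f hf using fun x =>
    cauchySeq_tendsto_of_complete (cauchySeq_of_le_geometric_two (hC · x))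
  choose f' hf' using fun y =>
    cauchySeq_tendsto_of_complete (cauchySeq_of_le_geometric_two (hCsymm · y))
  have hf_lip : LipschitzWith K f := LipschitzWith.of_dist_le_mul fun x y =>
    le_of_tendsto' ((hf x).dist (hf y)) fun k => (hL k).dist_le_mul x y
  have hf_anti : AntilipschitzWith K f := AntilipschitzWith.of_le_mul_dist fun x y =>
    ge_of_tendsto' (((hf x).dist (hf y)).const_mul (K : ℝ)) fun k => (hA k).le_mul_dist x y
  have hf_f' : ∀ y, f (f' y) = y := fun y => by
    have hdist : Tendsto (fun k => dist (H k (f' y)) (H k ((H k).symm y))) atTop (𝓝 0) := by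
      refine squeeze_zero (fun _ => dist_nonneg) (fun k => (hL k).dist_le_mul _ _) ?_
      simpa using ((tendsto_const_nhds (x := f' y)).dist (hf' y)).const_mul (K : ℝ)
    have := tendsto_of_tendsto_of_dist (hf (f' y)) hdist
    simp only [Equiv.apply_symm_apply] at this
    exact tendsto_nhds_unique this tendsto_const_nhds
  exact ⟨Equiv.ofBijective f ⟨hf_anti.injective, fun y => ⟨f' y, hf_f' y⟩⟩, hf_lip, hf_anti, hf⟩

theorem NNReal.exists_one_lt_forall_prod_le {K : ℝ≥0} (hK : 1 < K) :
    ∃ μ : ℕ → ℝ≥0, (∀ k, 1 < μ k) ∧ ∀ k, ∏ j ∈ Finset.range k, μ j ≤ K := by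
  have hK0 : K ≠ 0 := (one_pos.trans hK).ne'
  have hprod : ∀ k, ∏ j ∈ Finset.range k, K ^ ((1 / 2 : ℝ) ^ (j + 1)) =
      K ^ (1 - (1 / 2 : ℝ) ^ k) := by
    intro k
    induction k with
    | zero => simp
    | succ k ih =>
      rw [Finset.prod_range_succ, ih, ← NNReal.rpow_add hK0]
      ring_nf
  refine ⟨fun k => K ^ ((1 / 2 : ℝ) ^ (k + 1)), fun k => NNReal.one_lt_rpow hK (by positivity),
    fun k => ?_⟩
  rw [hprod]
  conv_rhs => rw [← NNReal.rpow_one K]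
  exact NNReal.rpow_le_rpow_of_exponent_le hK.le (by simp)

def composeSeq {α : Type*} (G : ℕ → (α ≃ α) → α ≃ α) : ℕ → α ≃ α
  | 0 => Equiv.refl α
  | k + 1 => (composeSeq G k).trans (G k (composeSeq G k))

section composeSeq

variable {α : Type*} {G : ℕ → (α ≃ α) → α ≃ α}

theorem composeSeq_succ_apply (k : ℕ) (x : α) :
    composeSeq G (k + 1) x = G k (composeSeq G k) (composeSeq G k x) := rfl

theorem lipschitzWith_composeSeq [PseudoEMetricSpace α] {μ : ℕ → ℝ≥0}
    (hG : ∀ k H, LipschitzWith (μ k) (G k H)) (k : ℕ) :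
    LipschitzWith (∏ j ∈ Finset.range k, μ j) (composeSeq G k) := by
  induction k with
  | zero => exact LipschitzWith.id
  | succ k ih => rw [Finset.prod_range_succ, mul_comm]; exact (hG k _).comp ih

theorem antilipschitzWith_composeSeq [PseudoEMetricSpace α] {μ : ℕ → ℝ≥0}
    (hG : ∀ k H, AntilipschitzWith (μ k) (G k H)) (k : ℕ) :
    AntilipschitzWith (∏ j ∈ Finset.range k, μ j) (composeSeq G k) := by
  induction k with
  | zero => exact AntilipschitzWith.id
  | succ k ih => rw [Finset.prod_range_succ]; exact (hG k _).comp ih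

theorem eqOn_composeSeq {s : Set α} (hG : ∀ k H, EqOn (G k H) id s) (k : ℕ) :
    EqOn (composeSeq G k) id s := by
  induction k with
  | zero => exact fun _ _ => rfl
  | succ k ih => intro x hx; rw [composeSeq_succ_apply, ih hx]; exact hG k _ hx

theorem composeSeq_apply_of_lt {e : ℕ → α} (hG : ∀ k H, ∀ j < k, G k H (H (e j)) = H (e j))
    {j k : ℕ} (hjk : j < k) : composeSeq G k (e j) = composeSeq G (j + 1) (e j) := by
  induction k with
  | zero => exact absurd hjk (Nat.not_lt_zero j)
  | succ k ih =>
    rcases Nat.lt_succ_iff_lt_or_eq.1 hjk with hjk | rfl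
    · rw [composeSeq_succ_apply, hG k _ j hjk, ih hjk]
    · rfl

end composeSeq

section Construction

variable {E : Type*} [NormedAddCommGroup E] [NormedSpace ℝ E] [CompleteSpace E]
  {U : Set E} {T : E → Set E}

theorem exists_bump_step (hU : IsOpen U) (e : ℕ → E) (hT : ∀ k, U ⊆ closure (T (e k)))
    {μ : ℝ≥0} (hμ : 1 < μ) {δ : ℝ} (hδ : 0 < δ) (H : E ≃ E) (k : ℕ) :
    ∃ g : E ≃ E, LipschitzWith μ g ∧ AntilipschitzWith μ g ∧ (∀ x, dist (g x) x ≤ δ) ∧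
      EqOn g id Uᶜ ∧ (∀ j < k, g (H (e j)) = H (e j)) ∧
      (H (e k) ∈ U → (∀ j < k, e j ≠ e k) → g (H (e k)) ∈ T (e k)) := by
  by_cases hp : H (e k) ∈ U ∧ ∀ j < k, e j ≠ e k
  · set F := (fun j => H (e j)) '' Iio k
    have hpF : H (e k) ∉ F := by
      rintro ⟨j, hj, hjk⟩
      exact hp.2 j hj (H.injective hjk)
    obtain ⟨g, hlip, hanti, hnear, hfix, hgp⟩ := exists_equiv_bump_mem hU ((finite_Iio k).image _)
      hp.1 hpF (hT k hp.1) hμ hδ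
    exact ⟨g, hlip, hanti, hnear, hfix.mono (compl_subset_compl.2 sdiff_subset),
      fun j hj => hfix fun hx => hx.2 ⟨j, hj, rfl⟩, fun _ _ => hgp⟩
  · exact ⟨Equiv.refl E, LipschitzWith.id.weaken hμ.le, AntilipschitzWith.id.weaken hμ.le,
      fun x => by simpa using hδ.le, fun _ _ => rfl, fun _ _ => rfl,
      fun h1 h2 => absurd ⟨h1, h2⟩ hp⟩

theorem exists_equiv_forall_apply_mem (hU : IsOpen U) (e : ℕ → E) (he : ∀ k, e k ∈ U)
    (hT : ∀ k, U ⊆ closure (T (e k))) {K : ℝ≥0} (hK : 1 < K) {δ : ℝ} (hδ : 0 < δ) :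
    ∃ h : E ≃ E, LipschitzWith K h ∧ AntilipschitzWith K h ∧ EqOn h id Uᶜ ∧
      (∀ x, dist (h x) x ≤ δ) ∧ ∀ k, h (e k) ∈ T (e k) := by
  classical
  obtain ⟨μ, hμ, hμK⟩ := NNReal.exists_one_lt_forall_prod_le hK
  choose G hGlip hGanti hGnear hGfix hGpts hGmem using fun k H =>
    exists_bump_step hU e hT (hμ k) (δ := δ / 2 / 2 ^ k) (by positivity) H k
  have hC : ∀ k x, dist (composeSeq G k x) (composeSeq G (k + 1) x) ≤ δ / 2 / 2 ^ k :=
    fun k x => by rw [dist_comm]; exact hGnear k _ _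
  obtain ⟨h, hlip, hanti, hlim⟩ := exists_equiv_tendsto_of_le_geometric_two
    (fun k => (lipschitzWith_composeSeq hGlip k).weaken (hμK k))
    (fun k => (antilipschitzWith_composeSeq hGanti k).weaken (hμK k)) hC
  have hfix := eqOn_composeSeq hGfix
  refine ⟨h, hlip, hanti, fun x hx => ?_, fun x => ?_, fun k => ?_⟩
  · exact tendsto_nhds_unique (hlim x) (tendsto_const_nhds.congr fun k => (hfix k hx).symm)
  · rw [dist_comm]
    exact dist_le_of_le_geometric_two_of_tendsto₀ (hC · x) (hlim x)
  -- the first occurrence `e i` of the point `e k` is the one the construction moves into `T`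
  have hex : ∃ i, e i = e k := ⟨k, rfl⟩
  set i := Nat.find hex
  have hi : e i = e k := Nat.find_spec hex
  have hmem : composeSeq G (i + 1) (e i) ∈ T (e i) :=
    hGmem i _ (Equiv.mapsTo_of_eqOn_compl (hfix i) (he i))
      fun j hj hji => Nat.find_min hex hj (hji.trans hi)
  have hlimit : h (e k) = composeSeq G (i + 1) (e i) := by
    refine tendsto_nhds_unique (hlim (e k))
      (tendsto_atTop_of_eventually_const (i₀ := i + 1) fun m hm => ?_)
    rw [← hi]
    exact composeSeq_apply_of_lt hGpts hm
  rwa [hlimit, ← hi]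

theorem exists_equiv_forall_mem_of_countable (hU : IsOpen U) {S : Set E} (hS : S.Countable)
    (hSU : S ⊆ U) (hT : ∀ x ∈ S, U ⊆ closure (T x)) {K : ℝ≥0} (hK : 1 < K) {δ : ℝ}
    (hδ : 0 < δ) :
    ∃ h : E ≃ E, LipschitzWith K h ∧ AntilipschitzWith K h ∧ EqOn h id Uᶜ ∧
      (∀ x, dist (h x) x ≤ δ) ∧ ∀ x ∈ S, h x ∈ T x := by
  rcases S.eq_empty_or_nonempty with rfl | hne
  · exact ⟨Equiv.refl E, LipschitzWith.id.weaken hK.le, AntilipschitzWith.id.weaken hK.le,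
      fun _ _ => rfl, fun x => by simpa using hδ.le, fun _ h => h.elim⟩
  obtain ⟨e, rfl⟩ := hS.exists_eq_range hne
  obtain ⟨h, hlip, hanti, hfix, hnear, hmem⟩ := exists_equiv_forall_apply_mem hU e
    (fun k => hSU ⟨k, rfl⟩) (fun k => hT _ ⟨k, rfl⟩) hK hδ
  exact ⟨h, hlip, hanti, hfix, hnear, forall_mem_range.2 hmem⟩

end Construction

theorem interior_Sq : interior Sq = SqO := by
  rw [Sq, interior_prod_eq, interior_Icc, SqO]

theorem dE_eq_dist (x y : ℝ × ℝ) :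
    dE x y = dist (Complex.equivRealProdCLM.symm x) (Complex.equivRealProdCLM.symm y) := by
  simp [dE, Complex.dist_eq_re_im]

theorem stmt3_general (V W : ℕ → Set (ℝ × ℝ))
    (hVsub : ∀ n, V n ⊆ SqO) (hVcount : ∀ n, (V n).Countable)
    (hVdisj : ∀ m n : ℕ, m ≠ n → Disjoint (V m) (V n))
    (hWdense : ∀ n, Sq ⊆ closure (W n))
    (lam : ℝ) (hlam : 1 < lam) (ε : ℝ) (hε : 0 < ε) :
    ∃ h : ↥Sq → ↥Sq, Function.Bijective h ∧
      (∀ x y : ↥Sq, dE (x : ℝ × ℝ) (y : ℝ × ℝ) / lam ≤ dE (h x : ℝ × ℝ) (h y : ℝ × ℝ) ∧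
        dE (h x : ℝ × ℝ) (h y : ℝ × ℝ) ≤ lam * dE (x : ℝ × ℝ) (y : ℝ × ℝ)) ∧
      (∀ x : ↥Sq, (x : ℝ × ℝ) ∈ bdSq → h x = x) ∧
      (∀ x : ↥Sq, dE (h x : ℝ × ℝ) (x : ℝ × ℝ) < ε) ∧
      (∀ n : ℕ, ∀ x : ↥Sq, (x : ℝ × ℝ) ∈ V n → (h x : ℝ × ℝ) ∈ W n) := by
  set e := Complex.equivRealProdCLM
  have hSqO : SqO ⊆ Sq := prod_mono Ioo_subset_Icc_self Ioo_subset_Icc_self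
  -- the target of a point of `V m` is `W m`, well defined since the `V n` are disjoint
  set T : ℝ × ℝ → Set (ℝ × ℝ) := fun p => {q | ∀ n, p ∈ V n → q ∈ W n}
  have hT : ∀ z ∈ e ⁻¹' ⋃ n, V n, e ⁻¹' SqO ⊆ closure (e ⁻¹' T (e z)) := by
    intro z hz
    obtain ⟨m, hm⟩ := mem_iUnion.1 hz
    have hTW : W m ⊆ T (e z) := fun q hq n hn => by
      obtain rfl : n = m := by_contra fun hnm => (hVdisj n m hnm).ne_of_mem hn hm rfl
      exact hq
    rw [← e.preimage_closure]
    exact preimage_mono ((hSqO.trans (hWdense m)).trans (closure_mono hTW))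
  have hK : (lam.toNNReal : ℝ) = lam := Real.coe_toNNReal lam (by linarith)
  obtain ⟨g, hlip, hanti, hfix, hnear, hmem⟩ := exists_equiv_forall_mem_of_countable
    (isOpen_Ioo.prod isOpen_Ioo |>.preimage e.continuous)
    ((countable_iUnion hVcount).preimage e.injective) (preimage_mono (iUnion_subset hVsub)) hT
    (Real.one_lt_toNNReal.2 hlam) (half_pos hε)
  set f := e.toEquiv.permCongr g
  have hf : ∀ x, f x = e (g (e.symm x)) := fun x => rfl
  have hdE : ∀ x y, dE x y = dist (e.symm x) (e.symm y) := dE_eq_dist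
  have hfix' : EqOn f id SqOᶜ := fun x hx => by
    rw [hf, hfix (show e (e.symm x) ∉ SqO by simpa using hx)]
    exact e.apply_symm_apply x
  refine ⟨f.subtypeEquiv fun x => (Equiv.apply_mem_iff_of_eqOn_compl hfix' hSqO x).symm,
    Equiv.bijective _, fun x y => ?_, fun x hx => ?_, fun x => ?_, fun n x hx => ?_⟩
  · simp only [Equiv.subtypeEquiv_apply, hf, hdE, e.symm_apply_apply]
    rw [div_le_iff₀ (by linarith), mul_comm, ← hK]
    exact ⟨hanti.le_mul_dist _ _, hlip.dist_le_mul _ _⟩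
  · exact Subtype.ext (hfix' fun hxO => hx.2 (by rwa [interior_Sq]))
  · simp only [Equiv.subtypeEquiv_apply, hf, hdE, e.symm_apply_apply]
    exact (hnear _).trans_lt (half_lt_self hε)
  · have := hmem (e.symm x) (by simpa using mem_iUnion_of_mem n hx)
    simpa [hf] using this n (by simpa using hx)

theorem stmt3 (V W : ℕ → Set (ℝ × ℝ))
    (hVsub : ∀ n, V n ⊆ SqO) (hVcount : ∀ n, (V n).Countable)
    (hVdisj : ∀ m n : ℕ, m ≠ n → Disjoint (V m) (V n))
    (hVdense : ∀ n, Sq ⊆ closure (V n))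
    (hWsub : ∀ n, W n ⊆ SqO)
    (hWdisj : ∀ m n : ℕ, m ≠ n → Disjoint (W m) (W n))
    (hWdense : ∀ n, Sq ⊆ closure (W n))
    (lam : ℝ) (hlam : 1 < lam) (ε : ℝ) (hε : 0 < ε) :
    ∃ h : ↥Sq → ↥Sq, Function.Bijective h ∧
      (∀ x y : ↥Sq, dE (x : ℝ × ℝ) (y : ℝ × ℝ) / lam ≤ dE (h x : ℝ × ℝ) (h y : ℝ × ℝ) ∧
        dE (h x : ℝ × ℝ) (h y : ℝ × ℝ) ≤ lam * dE (x : ℝ × ℝ) (y : ℝ × ℝ)) ∧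
      (∀ x : ↥Sq, (x : ℝ × ℝ) ∈ bdSq → h x = x) ∧
      (∀ x : ↥Sq, dE (h x : ℝ × ℝ) (x : ℝ × ℝ) < ε) ∧
      (∀ n : ℕ, ∀ x : ↥Sq, (x : ℝ × ℝ) ∈ V n → (h x : ℝ × ℝ) ∈ W n) :=
  stmt3_general V W hVsub hVcount hVdisj hWdense lam hlam ε hε
end

section
/- Let A = S¹ × [0,1] be the annulus, where S¹ is the unit circle in the complex plane, and let f : A → A be the homeomorphism defined by f(e^{2πix}, y) = (e^{2πi(x+y)}, y) for all (x,y) ∈ ℝ × [0,1]. Then f is n-sensitive for every integer n ≥ 2, but f is not ω-sensitive. -/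
/-- The ω-limit set of a point `x` under a map `f`. -/
def omegaLimitSet {X : Type*} [TopologicalSpace X] (f : X → X) (x : X) : Set X :=
  {y | ∃ φ : ℕ → ℕ, StrictMono φ ∧ (∀ i, 0 < φ i) ∧
    Filter.Tendsto (fun i => f^[φ i] x) Filter.atTop (nhds y)}

/-- The distance between two sets: `d(A,B) = inf {d(a,b) : a ∈ A, b ∈ B}`. -/
noncomputable def setDist {X : Type*} [MetricSpace X] (A B : Set X) : ℝ :=
  sInf (Set.image2 dist A B)

/-- `f` is `(ω,n)`-sensitive. -/
def OmegaNSensitive {X : Type*} [MetricSpace X] (f : X → X) (n : ℕ) : Prop :=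
  ∃ s > (0 : ℝ), ∀ x : X, ∀ U ∈ nhds x, ∃ y : Fin n → X,
    (∀ i, y i ∈ U) ∧
    ∀ i j, i ≠ j → s < setDist (omegaLimitSet f (y i)) (omegaLimitSet f (y j))

/-- `f` is `n`-sensitive. -/
def NSensitive {X : Type*} [MetricSpace X] (f : X → X) (n : ℕ) : Prop :=
  ∃ s > (0 : ℝ), ∀ x : X, ∀ U ∈ nhds x, ∃ y : Fin n → X, ∃ k : ℕ,
    (∀ i, y i ∈ U) ∧
    ∀ i j, i ≠ j → s < dist (f^[k] (y i)) (f^[k] (y j))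

/-- The annulus `A = S¹ × [0,1]`, where `S¹ ⊆ ℂ` is the unit circle. -/
abbrev Annulus : Type := ↥(Metric.sphere (0 : ℂ) 1) × ↥(Set.Icc (0 : ℝ) 1)

/-- The annulus homeomorphism `f(e^{2πix}, y) = (e^{2πi(x+y)}, y)`,
i.e. `f(z, y) = (z ⬝ e^{2πiy}, y)`. -/
noncomputable def annulusMap (w : Annulus) : Annulus :=
  (⟨(w.1 : ℂ) * Complex.exp (2 * Real.pi * (w.2 : ℝ) * Complex.I), by
      have h1 : ‖(w.1 : ℂ)‖ = 1 := mem_sphere_zero_iff_norm.1 w.1.2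
      rw [mem_sphere_zero_iff_norm, norm_mul, h1, one_mul,
        Complex.norm_exp]
      norm_num⟩,
    w.2)

/-!
At a fixed height `t` the map `annulusMap` is the rotation of the circle by `2πt`, an isometry of
a compact space, so every point returns arbitrarily close to itself: each point lies in its own
ω-limit set, and nearby points have ω-limit sets at distance less than their own distance.
On the other hand the rotation speed depends on the height: `n` points on one vertical segment at
heights spaced `1 / ((n + 1) K)` apart are spread by `K` iterates onto `n` distinct
`(n + 1)`-st roots of unity times a common factor, however short the segment is.
-/

open Complex Filter Function Metric Topology
open scoped Real

section

variable {X : Type*}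

theorem mem_omegaLimitSet_of_mapClusterPt [TopologicalSpace X] [FirstCountableTopology X]
    {f : X → X} {x y : X} (h : MapClusterPt y atTop fun n => f^[n] x) :
    y ∈ omegaLimitSet f x := by
  obtain ⟨ψ, hψ, hlim⟩ := h.tendsto_subseq
  exact ⟨fun i => ψ (i + 1), fun _ _ hij => hψ (Nat.succ_lt_succ hij),
    fun i => (Nat.zero_le _).trans_lt (hψ i.succ_pos), (tendsto_add_atTop_iff_nat 1).2 hlim⟩

theorem Isometry.iterate [PseudoEMetricSpace X] {f : X → X} (hf : Isometry f) :
    ∀ n, Isometry f^[n]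
  | 0 => isometry_id
  | n + 1 => (hf.iterate n).comp hf

theorem Isometry.mapClusterPt_iterate_self [MetricSpace X] [CompactSpace X] {f : X → X}
    (hf : Isometry f) (x : X) : MapClusterPt x atTop fun n => f^[n] x := by
  -- An isometry carries `dist (f^[a + b] x) (f^[b] x)` to `dist (f^[a] x) x`, and the orbit has a
  -- Cauchy subsequence.
  refine nhds_basis_ball.mapClusterPt_iff_frequently.2 fun ε hε => frequently_atTop.2 fun N => ?_
  obtain ⟨c, φ, hφ, hc⟩ := CompactSpace.tendsto_subseq fun n => f^[n] x
  obtain ⟨K, hK⟩ := Metric.cauchySeq_iff.1 hc.cauchySeq ε hε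
  refine ⟨φ (N + K) - φ K, Nat.le_sub_of_add_le (hφ.add_le_nat N K), ?_⟩
  have hdist := hK (N + K) (Nat.le_add_left K N) K le_rfl
  rwa [comp_apply, comp_apply, ← Nat.add_sub_of_le (hφ.monotone (Nat.le_add_left K N)),
    iterate_add_apply, (hf.iterate _).dist_eq] at hdist

theorem Function.Semiconj.mapClusterPt_iterate {Y : Type*} [TopologicalSpace X]
    [TopologicalSpace Y] {g : X → Y} {r : X → X} {f : Y → Y} (h : Semiconj g r f)
    (hg : Continuous g) {x : X} (hx : MapClusterPt x atTop fun n => r^[n] x) :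
    MapClusterPt (g x) atTop fun n => f^[n] (g x) := by
  simpa only [comp_def, (h.iterate_right _).eq] using hx.continuousAt_comp hg.continuousAt

theorem setDist_le_dist [MetricSpace X] {A B : Set X} {a b : X} (ha : a ∈ A) (hb : b ∈ B) :
    setDist A B ≤ dist a b :=
  csInf_le ⟨0, Set.forall_mem_image2.2 fun _ _ _ _ => dist_nonneg⟩ (Set.mem_image2_of_mem ha hb)

theorem not_omegaNSensitive_of_forall_mem_omegaLimitSet [MetricSpace X] [Nonempty X]
    {f : X → X} (hf : ∀ x, x ∈ omegaLimitSet f x) {n : ℕ} (hn : 2 ≤ n) :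
    ¬ OmegaNSensitive f n := by
  rintro ⟨s, hs, hsens⟩
  set x₀ := Classical.arbitrary X
  obtain ⟨y, hyU, hsep⟩ := hsens x₀ _ (ball_mem_nhds x₀ (half_pos hs))
  let i₀ : Fin n := ⟨0, by omega⟩
  let i₁ : Fin n := ⟨1, by omega⟩
  linarith [hsep i₀ i₁ (Fin.ne_of_val_ne zero_ne_one), setDist_le_dist (hf (y i₀)) (hf (y i₁)),
    dist_triangle_right (y i₀) (y i₁) x₀, mem_ball.1 (hyU i₀), mem_ball.1 (hyU i₁)]

theorem exists_pos_lt_dist_of_injective {ι : Type*} [Finite ι] [MetricSpace X] {g : ι → X}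
    (hg : Injective g) : ∃ s > 0, ∀ i j, i ≠ j → s < dist (g i) (g j) := by
  rcases isEmpty_or_nonempty {p : ι × ι // p.1 ≠ p.2} with hP | hP
  · exact ⟨1, one_pos, fun i j hij => (hP.false ⟨(i, j), hij⟩).elim⟩
  · obtain ⟨⟨⟨i₀, j₀⟩, h₀⟩, hmin⟩ :=
      Finite.exists_min fun p : {p : ι × ι // p.1 ≠ p.2} => dist (g p.1.1) (g p.1.2)
    have hpos : 0 < dist (g i₀) (g j₀) := dist_pos.2 (hg.ne h₀)
    exact ⟨_, half_pos hpos, fun i j hij => (half_lt_self hpos).trans_le (hmin ⟨(i, j), hij⟩)⟩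

end

theorem norm_exp_two_pi_mul_I (t : ℝ) : ‖exp (2 * π * t * I)‖ = 1 := by
  simpa using norm_exp_ofReal_mul_I (2 * π * t)

noncomputable def circleRotation (t : ℝ) (z : sphere (0 : ℂ) 1) : sphere (0 : ℂ) 1 :=
  ⟨z * exp (2 * π * t * I), by
    rw [mem_sphere_zero_iff_norm, norm_mul, norm_exp_two_pi_mul_I, mem_sphere_zero_iff_norm.1 z.2,
      one_mul]⟩

theorem isometry_circleRotation (t : ℝ) : Isometry (circleRotation t) :=
  Isometry.of_dist_eq fun z z' => by
    simp only [Subtype.dist_eq, dist_eq_norm, circleRotation, ← sub_mul, norm_mul,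
      norm_exp_two_pi_mul_I, mul_one]

theorem iterate_circleRotation (t : ℝ) (k : ℕ) :
    (circleRotation t)^[k] = circleRotation (k * t) := by
  induction k with
  | zero => ext z; simp [circleRotation]
  | succ k ih =>
    ext z
    rw [iterate_succ_apply', ih]
    simp only [circleRotation, mul_assoc, ← exp_add]
    push_cast
    ring_nf

theorem annulusMap_iterate_mk (k : ℕ) (z : sphere (0 : ℂ) 1) (t : Set.Icc (0 : ℝ) 1) :
    annulusMap^[k] (z, t) = (circleRotation (k * t) z, t) := by
  rw [← iterate_circleRotation]
  exact ((Semiconj.iterate_right (f := fun z => (z, t)) (fun _ => rfl) k).eq z).symm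

theorem mem_omegaLimitSet_annulusMap_self (w : Annulus) : w ∈ omegaLimitSet annulusMap w :=
  mem_omegaLimitSet_of_mapClusterPt <|
    Semiconj.mapClusterPt_iterate (g := fun z => (z, w.2)) (fun _ => rfl) (by fun_prop)
      ((isometry_circleRotation w.2).mapClusterPt_iterate_self w.1)

theorem exists_Icc_add_subset_Icc_zero_one_near {t r : ℝ} (ht : t ∈ Set.Icc (0 : ℝ) 1)
    (hr : r ≤ 1) : ∃ c, Set.Icc c (c + r) ⊆ Set.Icc 0 1 ∩ Set.Icc (t - r) (t + r) := by
  refine ⟨min t (1 - r), fun u ⟨hu₁, hu₂⟩ => ?_⟩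
  obtain ⟨ht₀, ht₁⟩ := ht
  rcases min_cases t (1 - r) with ⟨h, h'⟩ | ⟨h, h'⟩ <;> rw [h] at hu₁ hu₂ <;>
    exact ⟨⟨by linarith, by linarith⟩, ⟨by linarith, by linarith⟩⟩

theorem nSensitive_annulusMap (n : ℕ) : NSensitive annulusMap n := by
  set ζ : ℂ := exp (2 * π * I / (n + 1 : ℕ))
  have hζ : IsPrimitiveRoot ζ (n + 1) := isPrimitiveRoot_exp (n + 1) n.succ_ne_zero
  obtain ⟨s, hs, hsep⟩ := exists_pos_lt_dist_of_injective (g := fun i : Fin n => ζ ^ (i : ℕ))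
    fun i j hij => Fin.ext (hζ.pow_inj (by omega) (by omega) hij)
  refine ⟨s, hs, fun x U hU => ?_⟩
  obtain ⟨ε, hε, hball⟩ := Metric.mem_nhds_iff.1 hU
  obtain ⟨M, hM⟩ := exists_nat_one_div_lt hε
  set δ : ℝ := 1 / ((n + 1) * (M + 1))
  have hnδ : n * δ ≤ 1 / (M + 1) := by
    rw [mul_one_div, div_le_div_iff₀ (by positivity) (by positivity)]
    nlinarith
  have hnδ₁ : n * δ ≤ 1 := hnδ.trans (div_le_one_of_le₀ (by linarith) (by positivity))
  obtain ⟨c, hc⟩ := exists_Icc_add_subset_Icc_zero_one_near x.2.2 hnδ₁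
  have hmem : ∀ i : Fin n, c + i * δ ∈ Set.Icc c (c + n * δ) := fun i =>
    ⟨by simp only [le_add_iff_nonneg_right]; positivity, by gcongr; exact_mod_cast i.is_lt.le⟩
  set y : Fin n → Annulus := fun i => (x.1, ⟨c + i * δ, (hc (hmem i)).1⟩)
  set w := circleRotation ((M + 1 : ℕ) * c) x.1
  have hiter : ∀ i, ((annulusMap^[M + 1] (y i)).1 : ℂ) = w * ζ ^ (i : ℕ) := fun i => by
    simp only [y, w, ζ, δ, annulusMap_iterate_mk, circleRotation, mul_assoc, ← exp_nat_mul,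
      ← exp_add]
    congr 2
    push_cast
    field_simp
  refine ⟨y, M + 1, fun i => hball ?_, fun i j hij => ?_⟩
  · have hi := (hc (hmem i)).2
    rw [mem_ball, Prod.dist_eq, dist_self, Subtype.dist_eq, Real.dist_eq,
      max_eq_right (abs_nonneg _)]
    exact (abs_sub_le_iff.2 ⟨by linarith [hi.2], by linarith [hi.1]⟩).trans_lt (hnδ.trans_lt hM)
  · calc s < dist (ζ ^ (i : ℕ)) (ζ ^ (j : ℕ)) := hsep i j hij
      _ = dist (annulusMap^[M + 1] (y i)).1 (annulusMap^[M + 1] (y j)).1 := by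
        rw [Subtype.dist_eq, hiter, hiter, dist_eq_norm, dist_eq_norm, ← mul_sub, norm_mul,
          mem_sphere_zero_iff_norm.1 w.2, one_mul]
      _ ≤ dist (annulusMap^[M + 1] (y i)) (annulusMap^[M + 1] (y j)) := by
        rw [Prod.dist_eq]; exact le_max_left _ _

theorem stmt14 :
    (∀ n : ℕ, 2 ≤ n → NSensitive annulusMap n) ∧ ¬ OmegaNSensitive annulusMap 2 :=
  ⟨fun n _ => nSensitive_annulusMap n,
    not_omegaNSensitive_of_forall_mem_omegaLimitSet mem_omegaLimitSet_annulusMap_self le_rfl⟩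
end

section
/- Let f be a continuous self-map of a compact metric space X. If f is topologically transitive, has infinitely many minimal sets, and has the pseudo-orbit-tracing property, then f is (ω,n)-sensitive for every integer n ≥ 2. -/
/-- `M` is a minimal set of `f`. -/
def IsMinimalSet {X : Type*} [TopologicalSpace X] (f : X → X) (M : Set X) : Prop :=
  M.Nonempty ∧ IsClosed M ∧ f '' M ⊆ M ∧
    ∀ N ⊆ M, N.Nonempty → IsClosed N → f '' N ⊆ N → N = M

/-- `f` is topologically transitive. -/
def TopTransitive {X : Type*} [TopologicalSpace X] (f : X → X) : Prop :=
  ∀ U V : Set X, IsOpen U → IsOpen V → U.Nonempty → V.Nonempty →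
    ∃ k : ℕ, ((f^[k] '' U) ∩ V).Nonempty

/-- `f` has the pseudo-orbit-tracing property. -/
def POTP {X : Type*} [MetricSpace X] (f : X → X) : Prop :=
  ∀ ε > (0 : ℝ), ∃ δ > (0 : ℝ), ∀ x : ℕ → X,
    (∀ i, dist (f (x i)) (x (i + 1)) < δ) →
    ∃ z : X, ∀ i, dist (f^[i] z) (x i) < ε

open Metric Filter Set

section Aux

variable {X : Type*} [MetricSpace X]

lemma setDist_le_dist' {A B : Set X} {p q : X} (hp : p ∈ A) (hq : q ∈ B) :
    setDist A B ≤ dist p q := by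
  apply csInf_le
  · refine ⟨0, ?_⟩
    rintro d ⟨a, _, b, _, rfl⟩
    exact dist_nonneg
  · exact Set.mem_image2_of_mem hp hq

lemma le_setDist' {A B : Set X} {c : ℝ} (hA : A.Nonempty) (hB : B.Nonempty)
    (h : ∀ p ∈ A, ∀ q ∈ B, c ≤ dist p q) : c ≤ setDist A B := by
  apply le_csInf
  · obtain ⟨a, ha⟩ := hA
    obtain ⟨b, hb⟩ := hB
    exact ⟨dist a b, Set.mem_image2_of_mem ha hb⟩
  · rintro d ⟨a, ha, b, hb, rfl⟩
    exact h a ha b hb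

lemma iterate_mem_of_invariant {Y : Type*} {f : Y → Y} {M : Set Y}
    (hM : f '' M ⊆ M) {m : Y} (hm : m ∈ M) : ∀ t, f^[t] m ∈ M := by
  intro t
  induction t with
  | zero => simpa
  | succ t ih =>
      rw [Function.iterate_succ_apply']
      exact hM ⟨_, ih, rfl⟩

lemma minimal_inter_empty {Y : Type*} [TopologicalSpace Y] {f : Y → Y} {M N : Set Y}
    (hM : IsMinimalSet f M) (hN : IsMinimalSet f N) (hne : M ≠ N) : M ∩ N = ∅ := by
  by_contra h
  have hint : (M ∩ N).Nonempty := Set.nonempty_iff_ne_empty.2 h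
  have hsub : f '' (M ∩ N) ⊆ M ∩ N := by
    rintro y ⟨x, ⟨hxM, hxN⟩, rfl⟩
    exact ⟨hM.2.2.1 ⟨x, hxM, rfl⟩, hN.2.2.1 ⟨x, hxN, rfl⟩⟩
  have h1 := hM.2.2.2 (M ∩ N) Set.inter_subset_left hint (hM.2.1.inter hN.2.1) hsub
  have h2 := hN.2.2.2 (M ∩ N) Set.inter_subset_right hint (hM.2.1.inter hN.2.1) hsub
  exact hne (h1.symm.trans h2)

lemma pos_setDist [CompactSpace X] {M N : Set X}
    (hMc : IsClosed M) (hNc : IsClosed N) (hMne : M.Nonempty) (hNne : N.Nonempty)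
    (hdisj : M ∩ N = ∅) : 0 < setDist M N := by
  obtain ⟨p0, hp0, hmin⟩ := hMc.isCompact.exists_isMinOn hMne
    ((continuous_infDist_pt N).continuousOn)
  have hp0N : p0 ∉ N := fun h => (Set.eq_empty_iff_forall_notMem.1 hdisj p0) ⟨hp0, h⟩
  have hc : 0 < Metric.infDist p0 N := (hNc.notMem_iff_infDist_pos hNne).1 hp0N
  refine lt_of_lt_of_le hc (le_setDist' hMne hNne ?_)
  intro p hp q hq
  exact le_trans (hmin hp) (Metric.infDist_le_dist_of_mem hq)

lemma omega_trapped [CompactSpace X] {f : X → X} {z m : X} {M : Set X} {k : ℕ} {ε : ℝ}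
    (hMc : IsClosed M) (hMne : M.Nonempty) (hminv : ∀ t, f^[t] m ∈ M)
    (hsh : ∀ j, k ≤ j → dist (f^[j] z) (f^[j - k] m) < ε) :
    (omegaLimitSet f z).Nonempty ∧
      ∀ y ∈ omegaLimitSet f z, ∃ p ∈ M, dist y p ≤ ε := by
  constructor
  · obtain ⟨a, -, φ, hφ, hconv⟩ :=
      isCompact_univ.tendsto_subseq (x := fun i => f^[i + 1] z) (fun i => Set.mem_univ _)
    exact ⟨a, fun i => φ i + 1, fun i j hij => Nat.succ_lt_succ (hφ hij),
      fun i => Nat.succ_pos _, hconv⟩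
  · rintro y ⟨φ, hφ, -, hconv⟩
    have hd : Filter.Tendsto (fun i => dist y (f^[φ i] z)) Filter.atTop (nhds 0) := by
      simpa using (tendsto_const_nhds (x := y)).dist hconv
    have hinf : Metric.infDist y M ≤ ε := by
      have hev : ∀ᶠ i in Filter.atTop, Metric.infDist y M ≤ dist y (f^[φ i] z) + ε := by
        filter_upwards [Filter.eventually_atTop.2 ⟨k, fun i hi => hi⟩] with i hi
        have hki : k ≤ φ i := le_trans hi hφ.le_apply
        calc Metric.infDist y M ≤ dist y (f^[φ i - k] m) :=
              Metric.infDist_le_dist_of_mem (hminv _)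
          _ ≤ dist y (f^[φ i] z) + dist (f^[φ i] z) (f^[φ i - k] m) := dist_triangle _ _ _
          _ ≤ dist y (f^[φ i] z) + ε := by linarith [hsh (φ i) hki]
      have hlim : Filter.Tendsto (fun i => dist y (f^[φ i] z) + ε)
          Filter.atTop (nhds (0 + ε)) := hd.add tendsto_const_nhds
      have := ge_of_tendsto hlim hev
      linarith
    obtain ⟨p, hpM, hpd⟩ := hMc.isCompact.exists_infDist_eq_dist hMne y
    exact ⟨p, hpM, hpd ▸ hinf⟩

end Aux

set_option maxHeartbeats 1000000 in
theorem stmt16 {X : Type*} [MetricSpace X] [CompactSpace X]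
    (f : X → X) (hf : Continuous f)
    (htrans : TopTransitive f)
    (hmin : {M : Set X | IsMinimalSet f M}.Infinite)
    (hpotp : POTP f) :
    ∀ n : ℕ, 2 ≤ n → OmegaNSensitive f n := by
  intro n hn
  -- pick n distinct minimal sets
  let g : ℕ ↪ {M : Set X | IsMinimalSet f M} := Set.Infinite.natEmbedding _ hmin
  set M : Fin n → Set X := fun i => (g i.1).1 with hMdef
  have hMmin : ∀ i, IsMinimalSet f (M i) := fun i => (g i.1).2
  have hMinj : Function.Injective M := by
    intro i j h
    have h2 : g i.1 = g j.1 := Subtype.ext h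
    exact Fin.ext (g.injective h2)
  have hpos : ∀ i j : Fin n, i ≠ j → 0 < setDist (M i) (M j) := by
    intro i j hij
    exact pos_setDist (hMmin i).2.1 (hMmin j).2.1 (hMmin i).1 (hMmin j).1
      (minimal_inter_empty (hMmin i) (hMmin j) (fun h => hij (hMinj h)))
  -- minimal pairwise distance
  have hpairne : (Finset.univ.filter fun p : Fin n × Fin n => p.1 ≠ p.2).Nonempty := by
    refine ⟨(⟨0, by omega⟩, ⟨1, by omega⟩), Finset.mem_filter.2 ⟨Finset.mem_univ _, ?_⟩⟩
    simp [Fin.ext_iff]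
  set D : ℝ := (Finset.univ.filter fun p : Fin n × Fin n => p.1 ≠ p.2).inf' hpairne
    (fun p => setDist (M p.1) (M p.2)) with hDdef
  have hD0 : 0 < D := by
    rw [hDdef, Finset.lt_inf'_iff]
    intro p hp
    exact hpos p.1 p.2 (Finset.mem_filter.1 hp).2
  have hDle : ∀ i j : Fin n, i ≠ j → D ≤ setDist (M i) (M j) := by
    intro i j hij
    have hmem : ((i, j) : Fin n × Fin n) ∈ Finset.univ.filter
        (fun p : Fin n × Fin n => p.1 ≠ p.2) :=
      Finset.mem_filter.2 ⟨Finset.mem_univ _, hij⟩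
    exact Finset.inf'_le _ hmem
  refine ⟨D / 8, by linarith, ?_⟩
  intro x U hU
  obtain ⟨r, hr, hball⟩ := Metric.mem_nhds_iff.1 hU
  set ε : ℝ := min (D / 8) (r / 4) with hεdef
  have hε : 0 < ε := lt_min (by linarith) (by linarith)
  obtain ⟨δ, hδ, hδP⟩ := hpotp ε hε
  set δ' : ℝ := min δ ε with hδ'def
  have hδ'0 : 0 < δ' := lt_min hδ hε
  have key : ∀ i : Fin n, ∃ z, z ∈ U ∧ (omegaLimitSet f z).Nonempty ∧
      ∀ y ∈ omegaLimitSet f z, ∃ p ∈ M i, dist y p ≤ ε := by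
    intro i
    obtain ⟨m, hm⟩ := (hMmin i).1
    obtain ⟨k, w, hw1, hw2⟩ := htrans (ball x (r / 4)) (ball m δ') isOpen_ball isOpen_ball
      ⟨x, mem_ball_self (by linarith)⟩ ⟨m, mem_ball_self hδ'0⟩
    obtain ⟨u, hu, rfl⟩ := hw1
    have hwm : dist (f^[k] u) m < δ' := mem_ball.1 hw2
    set p : ℕ → X := fun j => if j < k then f^[j] u else f^[j - k] m with hpdef
    have hjump : ∀ j, dist (f (p j)) (p (j + 1)) < δ := by
      intro j
      rcases lt_trichotomy (j + 1) k with h | h | h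
      · have h0 : j < k := by omega
        simp only [hpdef]
        rw [if_pos h0, if_pos h, ← Function.iterate_succ_apply' f j u, dist_self]
        exact hδ
      · have h0 : j < k := by omega
        have hδ'δ : δ' ≤ δ := min_le_left _ _
        subst h
        simp only [hpdef]
        rw [if_pos h0, if_neg (by omega : ¬ j + 1 < j + 1),
          ← Function.iterate_succ_apply' f j u, Nat.sub_self,
          Function.iterate_zero_apply]
        exact lt_of_lt_of_le hwm hδ'δ
      · have h0 : ¬ j < k := by omega
        simp only [hpdef]
        rw [if_neg h0, if_neg (by omega : ¬ j + 1 < k),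
          ← Function.iterate_succ_apply' f (j - k) m,
          (by omega : j + 1 - k = (j - k) + 1), dist_self]
        exact hδ
    obtain ⟨z, hz⟩ := hδP p hjump
    have hz0 : dist z (p 0) < ε := by simpa using hz 0
    have hp0u : dist (p 0) u ≤ δ' := by
      by_cases h : 0 < k
      · simp only [hpdef]
        rw [if_pos h, Function.iterate_zero_apply, dist_self]
        exact hδ'0.le
      · have hk : k = 0 := by omega
        simp only [hpdef]
        rw [if_neg (by omega : ¬ (0 : ℕ) < k), Nat.zero_sub, Function.iterate_zero_apply]
        rw [dist_comm]
        have := hwm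
        rw [hk, Function.iterate_zero_apply] at this
        exact this.le
    have hzU : z ∈ U := by
      apply hball
      have hux : dist u x < r / 4 := mem_ball.1 hu
      have hεr : ε ≤ r / 4 := min_le_right _ _
      have hδ'r : δ' ≤ ε := min_le_right _ _
      have htri : dist z x ≤ dist z (p 0) + dist (p 0) u + dist u x := dist_triangle4 _ _ _ _
      have : dist z x < r := by linarith
      exact mem_ball.2 this
    have htail : ∀ j, k ≤ j → dist (f^[j] z) (f^[j - k] m) < ε := by
      intro j hj
      have := hz j
      simp only [hpdef] at this
      rwa [if_neg (by omega : ¬ j < k)] at this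
    obtain ⟨hne, htrap⟩ := omega_trapped (hMmin i).2.1 (hMmin i).1
      (iterate_mem_of_invariant (hMmin i).2.2.1 hm) htail
    exact ⟨z, hzU, hne, htrap⟩
  choose y hyU hyNE hyTrap using key
  refine ⟨y, hyU, ?_⟩
  intro i j hij
  have hlow : D - 2 * ε ≤ setDist (omegaLimitSet f (y i)) (omegaLimitSet f (y j)) := by
    apply le_setDist' (hyNE i) (hyNE j)
    intro a ha b hb
    obtain ⟨p, hpM, hpd⟩ := hyTrap i a ha
    obtain ⟨q, hqM, hqd⟩ := hyTrap j b hb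
    have h1 : D ≤ dist p q := le_trans (hDle i j hij) (setDist_le_dist' hpM hqM)
    have h2 : dist p q ≤ dist p a + dist a b + dist b q := dist_triangle4 _ _ _ _
    rw [dist_comm p a] at h2
    linarith
  have hεD : ε ≤ D / 8 := min_le_left _ _
  linarith
end

section
/- Let f be a continuous self-map of a compact metric space X and let n ≥ 2 be an integer. If f is (ω,n)-sensitive, then f is n-sensitive. -/
lemma omega_nonempty {X : Type*} [MetricSpace X] [CompactSpace X] (f : X → X) (x : X) :
    (omegaLimitSet f x).Nonempty := by
  obtain ⟨a, -, φ, hφ, hT⟩ := isCompact_univ.tendsto_subseq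
    (x := fun m => f^[m + 1] x) (fun n => Set.mem_univ _)
  exact ⟨a, fun i => φ i + 1, fun a b hab => by simpa using hφ hab,
    fun i => Nat.succ_pos _, hT⟩

lemma tendsto_infDist_omega {X : Type*} [MetricSpace X] [CompactSpace X] (f : X → X) (x : X) :
    Filter.Tendsto (fun m => Metric.infDist (f^[m] x) (omegaLimitSet f x))
      Filter.atTop (nhds 0) := by
  rw [Metric.tendsto_atTop]
  intro ε hε
  by_contra hc
  push_neg at hc
  have hfreq : ∃ᶠ m in Filter.atTop, ε ≤ Metric.infDist (f^[m] x) (omegaLimitSet f x) := by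
    rw [Filter.frequently_atTop]
    intro N
    obtain ⟨m, hm, hm2⟩ := hc N
    refine ⟨m, hm, ?_⟩
    rwa [Real.dist_eq, sub_zero, abs_of_nonneg Metric.infDist_nonneg] at hm2
  obtain ⟨φ, hφ, hP⟩ := Filter.extraction_of_frequently_atTop hfreq
  obtain ⟨z, -, ψ, hψ, hT⟩ := isCompact_univ.tendsto_subseq
    (x := fun m => f^[φ m] x) (fun n => Set.mem_univ _)
  have hz : z ∈ omegaLimitSet f x := by
    refine ⟨fun i => φ (ψ (i + 1)), fun a b hab => hφ (hψ (by omega)), ?_, ?_⟩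
    · intro i
      calc 0 < i + 1 := Nat.succ_pos _
        _ ≤ ψ (i + 1) := hψ.id_le _
        _ ≤ φ (ψ (i + 1)) := hφ.id_le _
    · exact hT.comp (Filter.tendsto_add_atTop_nat 1)
  have : Filter.Tendsto (fun i => dist (f^[φ (ψ i)] x) z) Filter.atTop (nhds 0) :=
    tendsto_iff_dist_tendsto_zero.mp hT
  obtain ⟨i, hi⟩ := (this.eventually_lt_const hε).exists
  have h1 : Metric.infDist (f^[φ (ψ i)] x) (omegaLimitSet f x) ≤ dist (f^[φ (ψ i)] x) z :=
    Metric.infDist_le_dist_of_mem hz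
  exact absurd (lt_of_le_of_lt (le_trans (hP (ψ i)) h1) hi) (lt_irrefl ε)

lemma setDist_le {X : Type*} [MetricSpace X] {A B : Set X} {a b : X}
    (ha : a ∈ A) (hb : b ∈ B) : setDist A B ≤ dist a b := by
  refine csInf_le ⟨0, ?_⟩ (Set.mem_image2_of_mem ha hb)
  rintro d ⟨u, -, v, -, rfl⟩
  exact dist_nonneg

theorem stmt17 {X : Type*} [MetricSpace X] [CompactSpace X]
    (f : X → X) (hf : Continuous f) (n : ℕ) (hn : 2 ≤ n)
    (h : OmegaNSensitive f n) : NSensitive f n := by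
  obtain ⟨s, hs, hsens⟩ := h
  refine ⟨s / 2, by linarith, ?_⟩
  intro x U hU
  obtain ⟨y, hyU, hyd⟩ := hsens x U hU
  have hev : ∀ᶠ m in Filter.atTop, ∀ i : Fin n,
      Metric.infDist (f^[m] (y i)) (omegaLimitSet f (y i)) < s / 4 := by
    rw [Filter.eventually_all]
    intro i
    exact (tendsto_infDist_omega f (y i)).eventually_lt_const (by linarith)
  obtain ⟨k, hk⟩ := hev.exists
  refine ⟨y, k, hyU, fun i j hij => ?_⟩
  have hne : ∀ i : Fin n, (omegaLimitSet f (y i)).Nonempty := fun i => omega_nonempty f (y i)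
  obtain ⟨a, ha, had⟩ := (Metric.infDist_lt_iff (hne i)).mp (hk i)
  obtain ⟨b, hb, hbd⟩ := (Metric.infDist_lt_iff (hne j)).mp (hk j)
  have h1 : setDist (omegaLimitSet f (y i)) (omegaLimitSet f (y j)) ≤ dist a b :=
    setDist_le ha hb
  have h2 := hyd i j hij
  have htri : dist a b ≤ dist a (f^[k] (y i)) + dist (f^[k] (y i)) (f^[k] (y j))
      + dist (f^[k] (y j)) b := dist_triangle4 a (f^[k] (y i)) (f^[k] (y j)) b
  rw [dist_comm] at had hbd
  linarith [dist_comm (f^[k] (y j)) b ▸ hbd]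
end
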